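/- arXiv:1607.02943 — 4 statements merged into one kernel-verified Lean document; each statement's English description precedes it below -/
import Mathlib

section
/- Let H be a Tonelli Hamiltonian on ℝⁿ × ℝⁿ with associated Tonelli Lagrangian L, and let λ > 0. Let u : ℝⁿ → ℝ be a C² function satisfying λu(x) + H(x, Du(x)) = 0 for all x ∈ ℝⁿ. Let (x,p) : I → ℝⁿ × ℝⁿ be a C¹ solution of the λ-discounted Hamiltonian equations with p(t) = Du(x(t)) for all t ∈ I. Then for every [a,b] ⊆ I the curve x|_{[a,b]} is (u,L)-λ-calibrated: e^{λb} u(x(b)) − e^{λa} u(x(a)) = ∫_a^b e^{λt} L(x(t), ẋ(t)) dt. -/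
open Set Filter MeasureTheory Real

noncomputable section

abbrev E (n : ℕ) : Type := EuclideanSpace ℝ (Fin n)

noncomputable def Hp {n : ℕ} (H : E n × E n → ℝ) (x p : E n) : E n :=
  gradient (fun q => H (x, q)) p

noncomputable def Hx {n : ℕ} (H : E n × E n → ℝ) (x p : E n) : E n :=
  gradient (fun y => H (y, p)) x

noncomputable def Lv {n : ℕ} (L : E n × E n → ℝ) (x v : E n) : E n :=
  gradient (fun w => L (x, w)) v

noncomputable def Lx {n : ℕ} (L : E n × E n → ℝ) (x v : E n) : E n :=
  gradient (fun y => L (y, v)) x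

/-- A Tonelli Hamiltonian. -/
def Tonelli {n : ℕ} (H : E n × E n → ℝ) : Prop :=
  ContDiff ℝ 2 H ∧
  (∀ x p v : E n, v ≠ 0 → 0 < (inner ℝ (fderiv ℝ (fun q => Hp H x q) p v) v : ℝ)) ∧
  (∀ A : ℝ, ∃ B : ℝ, 0 ≤ B ∧ ∀ x p : E n, A * ‖p‖ - B ≤ H (x, p))

/-- `L` is the Lagrangian associated to `H` by fiberwise Legendre-Fenchel transform. -/
def IsLagrangianOf {n : ℕ} (L H : E n × E n → ℝ) : Prop :=
  ∀ x v : E n, IsLUB {r : ℝ | ∃ p : E n, r = (inner ℝ p v : ℝ) - H (x, p)} (L (x, v))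

/-- A continuous piecewise `C¹` curve on `[a,b]`, with derivative `γ'`. -/
def PiecewiseC1 {n : ℕ} (a b : ℝ) (γ γ' : ℝ → E n) : Prop :=
  ContinuousOn γ (Set.Icc a b) ∧
  ∃ s : Finset ℝ,
    (∀ t ∈ Set.Icc a b, t ∉ s → HasDerivAt γ (γ' t) t) ∧
    ContinuousOn γ' (Set.Icc a b \ s) ∧
    ∃ C : ℝ, ∀ t ∈ Set.Icc a b, ‖γ' t‖ ≤ C

/-- `u` is λ-dominated by `L`. -/
def Dominated {n : ℕ} (lam : ℝ) (L : E n × E n → ℝ) (u : E n → ℝ) : Prop :=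
  ∀ a b : ℝ, a < b → ∀ γ γ' : ℝ → E n, PiecewiseC1 a b γ γ' →
    Real.exp (lam * b) * u (γ b) - Real.exp (lam * a) * u (γ a) ≤
      ∫ t in a..b, Real.exp (lam * t) * L (γ t, γ' t)

/-- `γ` is `(u,L)`-λ-calibrated on `[a,b]`. -/
def Calibrated {n : ℕ} (lam : ℝ) (L : E n × E n → ℝ) (u : E n → ℝ)
    (a b : ℝ) (γ γ' : ℝ → E n) : Prop :=
  Real.exp (lam * b) * u (γ b) - Real.exp (lam * a) * u (γ a) =
    ∫ t in a..b, Real.exp (lam * t) * L (γ t, γ' t)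

def intVec {n : ℕ} (k : Fin n → ℤ) : E n :=
  (EuclideanSpace.equiv (Fin n) ℝ).symm (fun i => (k i : ℝ))

/-!
Along the curve, `d/dt (e^{λt} u(x t)) = e^{λt} (λ u(x t) + ⟪Du(x t), ẋ t⟫)`. Since `p = Du(x)` and
`ẋ = ∂H/∂p(x, p)`, the Hamilton–Jacobi equation turns the bracket into
`⟪p, ∂H/∂p(x, p)⟫ - H(x, p)`, which is `L(x, ∂H/∂p(x, p))` by the Fenchel equality for the convex
function `H(x, ·)`. Integrating over `[a, b]` gives the calibration identity.
-/

open InnerProductSpace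

section Gradient

variable {F : Type*} [NormedAddCommGroup F] [InnerProductSpace ℝ F] [CompleteSpace F]

theorem ContDiff.continuous_gradient {f : F → ℝ} {k : WithTop ℕ∞} (hf : ContDiff ℝ k f)
    (hk : k ≠ 0) : Continuous (gradient f) :=
  (toDual ℝ F).symm.continuous.comp (hf.continuous_fderiv hk)

/-- Along the segment `s ↦ p + s • (q - p)` the slope `⟪∇f, q - p⟫` is nondecreasing, so the
mean value theorem bounds `f q - f p` from below by that slope at `p`. -/
theorem add_inner_gradient_sub_le {f : F → ℝ} (hf : ContDiff ℝ 2 f)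
    (hf'' : ∀ p v, 0 ≤ ⟪fderiv ℝ (gradient f) p v, v⟫_ℝ) (p q : F) :
    f p + ⟪gradient f p, q - p⟫_ℝ ≤ f q := by
  set w := q - p
  set c : ℝ → F := fun s => p + s • w
  have hc : ∀ s, HasDerivAt c w s := fun s => by
    simpa [c] using ((hasDerivAt_id s).smul_const w).const_add p
  set slope : ℝ → ℝ := fun s => ⟪gradient f (c s), w⟫_ℝ
  have hfc : ∀ s, HasDerivAt (fun s => f (c s)) (slope s) s := fun s => by
    have := ((hf.differentiable two_ne_zero) (c s)).hasGradientAt.hasFDerivAt.comp_hasDerivAt s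
      (hc s)
    simpa [slope, Function.comp_def, toDual_apply_apply] using this
  have hgrad : Differentiable ℝ (gradient f) :=
    ((toDual ℝ F).symm.contDiff.comp (hf.fderiv_right le_rfl)).differentiable one_ne_zero
  have hslope : ∀ s, HasDerivAt slope ⟪fderiv ℝ (gradient f) (c s) w, w⟫_ℝ s := fun s => by
    simpa [slope] using ((hgrad (c s)).hasFDerivAt.comp_hasDerivAt s (hc s)).inner ℝ
      (hasDerivAt_const s w)
  have hmono : Monotone slope := monotone_of_hasDerivAt_nonneg hslope fun s => hf'' (c s) w
  obtain ⟨s, hs, hmvt⟩ := exists_hasDerivAt_eq_slope (fun s => f (c s)) slope one_pos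
    (hf.continuous.comp (by fun_prop)).continuousOn fun s _ => hfc s
  have hc0 : c 0 = p := by simp [c]
  have hc1 : c 1 = q := by simp [c, w]
  have hle : slope 0 ≤ slope s := hmono hs.1.le
  simp only [hc0, hc1, sub_zero, div_one] at hmvt
  simp only [slope, hc0] at hle
  linarith

theorem isGreatest_inner_sub_gradient {f : F → ℝ} {p : F}
    (hf : ∀ q, f p + ⟪gradient f p, q - p⟫_ℝ ≤ f q) :
    IsGreatest {r | ∃ q, r = ⟪q, gradient f p⟫_ℝ - f q} (⟪p, gradient f p⟫_ℝ - f p) := by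
  refine ⟨⟨p, rfl⟩, ?_⟩
  rintro r ⟨q, rfl⟩
  have := hf q
  rw [inner_sub_right, real_inner_comm q, real_inner_comm p] at this
  linarith

theorem hasDerivAt_exp_mul_comp {u : F → ℝ} {γ : ℝ → F} {v : F} {t : ℝ} (lam : ℝ)
    (hu : DifferentiableAt ℝ u (γ t)) (hγ : HasDerivAt γ v t) :
    HasDerivAt (fun s => exp (lam * s) * u (γ s))
      (exp (lam * t) * (lam * u (γ t) + ⟪gradient u (γ t), v⟫_ℝ)) t := by
  have hexp : HasDerivAt (fun s => exp (lam * s)) (exp (lam * t) * lam) t := by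
    simpa using ((hasDerivAt_id t).const_mul lam).exp
  have hcomp : HasDerivAt (fun s => u (γ s)) ⟪gradient u (γ t), v⟫_ℝ t := by
    simpa [Function.comp_def, toDual_apply_apply] using
      hu.hasGradientAt.hasFDerivAt.comp_hasDerivAt t hγ
  exact (hexp.mul hcomp).congr_deriv (by ring)

end Gradient

section Tonelli

variable {n : ℕ} {H L : E n × E n → ℝ}

theorem continuous_Hp (hH : ContDiff ℝ 1 H) :
    Continuous fun z : E n × E n => Hp H z.1 z.2 := by
  have hpartial : ContDiff ℝ 0 fun z : E n × E n => fderiv ℝ (fun q => H (z.1, q)) z.2 :=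
    ContDiff.fderiv (f := fun z q => H (z.1, q)) (hH.comp (by fun_prop)) contDiff_snd le_rfl
  exact (toDual ℝ (E n)).symm.continuous.comp hpartial.continuous

theorem Tonelli.add_inner_Hp_sub_le (hH : Tonelli H) (x p q : E n) :
    H (x, p) + ⟪Hp H x p, q - p⟫_ℝ ≤ H (x, q) := by
  refine add_inner_gradient_sub_le (f := fun q => H (x, q)) (hH.1.comp (by fun_prop))
    (fun p v => ?_) p q
  rcases eq_or_ne v 0 with rfl | hv
  · simp
  · exact (hH.2.1 x p v hv).le

theorem IsLagrangianOf.apply_Hp (hLH : IsLagrangianOf L H)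
    (hH : Tonelli H) (x p : E n) :
    L (x, Hp H x p) = ⟪p, Hp H x p⟫_ℝ - H (x, p) :=
  (hLH x _).unique (isGreatest_inner_sub_gradient (hH.add_inner_Hp_sub_le x p)).isLUB

theorem IsLagrangianOf.apply_Hp_gradient (hLH : IsLagrangianOf L H)
    (hH : Tonelli H) {lam : ℝ} {u : E n → ℝ} (hHJ : ∀ y, lam * u y + H (y, gradient u y) = 0)
    (y : E n) :
    L (y, Hp H y (gradient u y)) = lam * u y + ⟪gradient u y, Hp H y (gradient u y)⟫_ℝ := by
  rw [hLH.apply_Hp hH]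
  linarith [hHJ y]

end Tonelli

theorem stmt_6_general {n : ℕ} (lam : ℝ)
    (H L : E n × E n → ℝ) (hH : Tonelli H) (hLH : IsLagrangianOf L H)
    (u : E n → ℝ) (hu : ContDiff ℝ 2 u)
    (hHJ : ∀ x : E n, lam * u x + H (x, gradient u x) = 0)
    (I : Set ℝ) (x p : ℝ → E n)
    (hx : ∀ t ∈ I, HasDerivAt x (Hp H (x t) (p t)) t)
    (hgr : ∀ t ∈ I, p t = gradient u (x t)) :
    ∀ a b : ℝ, a ≤ b → Set.Icc a b ⊆ I →
      Real.exp (lam * b) * u (x b) - Real.exp (lam * a) * u (x a) =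
        ∫ t in a..b, Real.exp (lam * t) * L (x t, Hp H (x t) (p t)) := by
  intro a b hab hI
  have hI' : ∀ t ∈ uIcc a b, t ∈ I := fun t ht => hI (by rwa [uIcc_of_le hab] at ht)
  have hgrad := hu.continuous_gradient two_ne_zero
  set ℓ : E n → ℝ := fun y => lam * u y + ⟪gradient u y, Hp H y (gradient u y)⟫_ℝ
  have hℓ : Continuous ℓ :=
    (continuous_const.mul hu.continuous).add <| hgrad.inner <|
      (continuous_Hp (hH.1.of_le one_le_two)).comp (continuous_id.prodMk hgrad)
  have hxc : ContinuousOn x (uIcc a b) := fun t ht =>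
    (hx t (hI' t ht)).continuousAt.continuousWithinAt
  have hderiv : ∀ t ∈ uIcc a b,
      HasDerivAt (fun s => exp (lam * s) * u (x s)) (exp (lam * t) * ℓ (x t)) t := by
    intro t ht
    have := hasDerivAt_exp_mul_comp lam ((hu.differentiable two_ne_zero) _) (hx t (hI' t ht))
    rwa [hgr t (hI' t ht)] at this
  rw [← intervalIntegral.integral_eq_sub_of_hasDerivAt hderiv <| ContinuousOn.intervalIntegrable <|
    (continuous_exp.comp (continuous_const.mul continuous_id)).continuousOn.mul
      (hℓ.comp_continuousOn hxc)]
  refine intervalIntegral.integral_congr fun t ht => ?_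
  simp only [ℓ, hgr t (hI' t ht), hLH.apply_Hp_gradient hH hHJ]

/-- If `u` is a `C²` solution of `λu + H(x,Du) = 0` and `(x,p)` is a solution of
the λ-discounted Hamiltonian equations lying on the graph of `Du`, then the
projected curve is `(u,L)`-λ-calibrated on every `[a,b] ⊆ I`. -/
theorem stmt_6 {n : ℕ} (hn : 1 ≤ n) (lam : ℝ) (hlam : 0 < lam)
    (H L : E n × E n → ℝ) (hH : Tonelli H) (hLH : IsLagrangianOf L H)
    (u : E n → ℝ) (hu : ContDiff ℝ 2 u)
    (hHJ : ∀ x : E n, lam * u x + H (x, gradient u x) = 0)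
    (I : Set ℝ) (x p : ℝ → E n)
    (hx : ∀ t ∈ I, HasDerivAt x (Hp H (x t) (p t)) t)
    (hp : ∀ t ∈ I, HasDerivAt p (-Hx H (x t) (p t) - lam • p t) t)
    (hgr : ∀ t ∈ I, p t = gradient u (x t)) :
    ∀ a b : ℝ, a ≤ b → Set.Icc a b ⊆ I →
      Real.exp (lam * b) * u (x b) - Real.exp (lam * a) * u (x a) =
        ∫ t in a..b, Real.exp (lam * t) * L (x t, Hp H (x t) (p t)) :=
  stmt_6_general lam H L hH hLH u hu hHJ I x p hx hgr
end
end

section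
/- Let H be a Tonelli Hamiltonian on ℝⁿ × ℝⁿ with associated Tonelli Lagrangian L, and let λ > 0. Suppose u : ℝⁿ → ℝ is continuous and λ-dominated by L, and γ : [a,b] → ℝⁿ is a C¹ (u,L)-λ-calibrated curve. If u is differentiable at γ(t₀) for some t₀ ∈ [a,b], then Du(γ(t₀)) = ∂L/∂v(γ(t₀), γ̇(t₀)) and λ u(γ(t₀)) + H(γ(t₀), Du(γ(t₀))) = 0. -/
open Set Filter MeasureTheory Real

noncomputable section

/-!
Calibration on `[a, b]` together with domination on `[a, t]` and `[t, b]` forces calibration on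
every `[a, t]`; differentiating at `t₀` gives `λ u(x₀) + Du(x₀) v₀ = L(x₀, v₀)`, where
`x₀ = γ t₀`, `v₀ = γ̇ t₀`. Domination along the segments `s ↦ x₀ + s v`, `s ≥ 0`, gives
`λ u(x₀) + Du(x₀) v ≤ L(x₀, v)` for every `v`, so `v₀` maximises `Du(x₀) v - L(x₀, v)` and
`Du(x₀) = ∂L/∂v(x₀, v₀)`. By superlinearity of `H` the supremum defining `L(x₀, v₀)` is
attained at some `p`; then `v₀` also maximises `⟪p, v⟫ - L(x₀, v)`, so
`p = ∂L/∂v(x₀, v₀) = Du(x₀)`, and the Fenchel equality `L(x₀, v₀) = ⟪p, v₀⟫ - H(x₀, p)` turns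
the first identity into `λ u(x₀) + H(x₀, Du(x₀)) = 0`.
-/

section Calculus

variable {F : Type*} [NormedAddCommGroup F] [NormedSpace ℝ F]

theorem hasDerivAt_exp_mul_mul_comp {u : F → ℝ} {u' : F →L[ℝ] ℝ} {γ : ℝ → F} {v x : F}
    {lam t : ℝ} (hu : HasFDerivAt u u' x) (hγ : HasDerivAt γ v t) (hx : γ t = x) :
    HasDerivAt (fun s => exp (lam * s) * u (γ s)) (exp (lam * t) * (lam * u x + u' v)) t := by
  have hexp : HasDerivAt (fun s => exp (lam * s)) (exp (lam * t) * lam) t := by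
    simpa using ((hasDerivAt_id t).const_mul lam).exp
  subst hx
  exact (hexp.mul (hu.comp_hasDerivAt t hγ)).congr_deriv
    (by simp only [Function.comp_apply]; ring)

theorem hasDerivWithinAt_of_eq_add_integral {G : Type*} [NormedAddCommGroup G]
    [NormedSpace ℝ G] [CompleteSpace G] {Φ f : ℝ → G} {a b t : ℝ}
    (hf : ContinuousOn f (Icc a b)) (hΦ : ∀ s ∈ Icc a b, Φ s = Φ a + ∫ r in a..s, f r)
    (ht : t ∈ Icc a b) : HasDerivWithinAt Φ (f t) (Icc a b) t := by
  have : Fact (t ∈ Icc a b) := ⟨ht⟩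
  have hFTC := (intervalIntegral.integral_hasDerivWithinAt_right (s := Icc a b)
    ((hf.mono (uIcc_subset_Icc (left_mem_Icc.2 (ht.1.trans ht.2)) ht)).intervalIntegrable)
    (hf.stronglyMeasurableAtFilter_nhdsWithin measurableSet_Icc t) (hf t ht)).const_add (Φ a)
  exact hFTC.congr hΦ (hΦ t ht)

theorem eq_fderiv_of_forall_sub_le {ℓ : F →L[ℝ] ℝ} {g : F → ℝ} {v₀ : F}
    (hg : DifferentiableAt ℝ g v₀) (hmax : ∀ v, ℓ v - g v ≤ ℓ v₀ - g v₀) :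
    ℓ = fderiv ℝ g v₀ :=
  sub_eq_zero.1 <| IsLocalMax.hasFDerivAt_eq_zero (.of_forall hmax)
    (ℓ.hasFDerivAt.sub hg.hasFDerivAt)

end Calculus

section Conjugate

variable {F : Type*} [NormedAddCommGroup F] [InnerProductSpace ℝ F] [ProperSpace F]

theorem exists_forall_inner_sub_le {h : F → ℝ} (hc : Continuous h)
    (hsuper : ∀ A : ℝ, ∃ B : ℝ, ∀ q, A * ‖q‖ - B ≤ h q) (v : F) :
    ∃ p, ∀ q, inner ℝ q v - h q ≤ inner ℝ p v - h p := by
  obtain ⟨B, hB⟩ := hsuper (‖v‖ + 1)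
  have hlim : Tendsto (fun q => h q - inner ℝ q v) (cocompact F) atTop := by
    refine tendsto_atTop_mono (fun q => ?_)
      (tendsto_atTop_add_const_right _ (-B) tendsto_norm_cocompact_atTop)
    nlinarith [hB q, real_inner_le_norm q v, norm_nonneg q]
  obtain ⟨p, hp⟩ :=
    Continuous.exists_forall_le (f := fun q => h q - inner ℝ q v) (by fun_prop) hlim
  exact ⟨p, fun q => by linarith [hp q]⟩

theorem eq_inner_gradient_sub_of_isLUB {ℓ h : F → ℝ}
    (hℓ : ∀ w, IsLUB {r | ∃ p, r = inner ℝ p w - h p} (ℓ w)) (hc : Continuous h)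
    (hsuper : ∀ A : ℝ, ∃ B : ℝ, ∀ q, A * ‖q‖ - B ≤ h q) {v : F}
    (hd : DifferentiableAt ℝ ℓ v) : ℓ v = inner ℝ (gradient ℓ v) v - h (gradient ℓ v) := by
  obtain ⟨p, hp⟩ := exists_forall_inner_sub_le hc hsuper v
  have hℓv : ℓ v = inner ℝ p v - h p :=
    le_antisymm ((hℓ v).2 (by rintro r ⟨q, rfl⟩; exact hp q)) ((hℓ v).1 ⟨p, rfl⟩)
  have hp_grad : innerSL ℝ p = fderiv ℝ ℓ v := eq_fderiv_of_forall_sub_le hd fun w => by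
    have := (hℓ w).1 ⟨p, rfl⟩
    simp only [innerSL_apply_apply]
    linarith
  have : gradient ℓ v = p := by
    rw [gradient, ← hp_grad, LinearIsometryEquiv.symm_apply_eq]
    ext w
    simp
  rwa [this]

end Conjugate

section Discounted

variable {n : ℕ} {lam : ℝ} {L : E n × E n → ℝ} {u : E n → ℝ} {γ γ' : ℝ → E n}

theorem piecewiseC1_of_hasDerivAt {a b : ℝ} (hγ : ∀ t ∈ Icc a b, HasDerivAt γ (γ' t) t)
    (hγ' : ContinuousOn γ' (Icc a b)) : PiecewiseC1 a b γ γ' := by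
  obtain ⟨C, hC⟩ := isCompact_Icc.exists_bound_of_continuousOn hγ'
  exact ⟨fun t ht => (hγ t ht).continuousAt.continuousWithinAt, ∅, fun t ht _ => hγ t ht,
    hγ'.mono sdiff_subset, C, hC⟩

theorem continuousOn_exp_mul_lagrangian (hL : Continuous L) {a b : ℝ}
    (hγ : ∀ t ∈ Icc a b, HasDerivAt γ (γ' t) t) (hγ' : ContinuousOn γ' (Icc a b)) :
    ContinuousOn (fun s => exp (lam * s) * L (γ s, γ' s)) (Icc a b) :=
  (continuous_exp.comp (continuous_const_mul lam)).continuousOn.mul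
    (hL.comp_continuousOn ((piecewiseC1_of_hasDerivAt hγ hγ').1.prodMk hγ'))

theorem Dominated.le_integral (hu : Dominated lam L u) {a b : ℝ} (hab : a ≤ b)
    (hγ : PiecewiseC1 a b γ γ') :
    exp (lam * b) * u (γ b) - exp (lam * a) * u (γ a) ≤
      ∫ t in a..b, exp (lam * t) * L (γ t, γ' t) := by
  rcases hab.eq_or_lt with rfl | hlt
  · simp
  · exact hu a b hlt γ γ' hγ

theorem Calibrated.left_of_dominated (hL : Continuous L) (hu : Dominated lam L u) {a b t : ℝ}
    (hγ : ∀ t ∈ Icc a b, HasDerivAt γ (γ' t) t) (hγ' : ContinuousOn γ' (Icc a b))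
    (hcal : Calibrated lam L u a b γ γ') (ht : t ∈ Icc a b) : Calibrated lam L u a t γ γ' := by
  have hf := continuousOn_exp_mul_lagrangian (lam := lam) hL hγ hγ'
  have hat : Icc a t ⊆ Icc a b := Icc_subset_Icc le_rfl ht.2
  have htb : Icc t b ⊆ Icc a b := Icc_subset_Icc ht.1 le_rfl
  have h₁ := hu.le_integral ht.1 (piecewiseC1_of_hasDerivAt (fun s hs => hγ s (hat hs))
    (hγ'.mono hat))
  have h₂ := hu.le_integral ht.2 (piecewiseC1_of_hasDerivAt (fun s hs => hγ s (htb hs))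
    (hγ'.mono htb))
  have hsplit := intervalIntegral.integral_add_adjacent_intervals
    ((hf.mono hat).intervalIntegrable_of_Icc (μ := volume) ht.1)
    ((hf.mono htb).intervalIntegrable_of_Icc (μ := volume) ht.2)
  unfold Calibrated at hcal ⊢
  linarith

theorem Calibrated.lam_mul_add_fderiv_eq (hL : Continuous L) (hu : Dominated lam L u)
    {a b t₀ : ℝ} (hab : a < b) (hγ : ∀ t ∈ Icc a b, HasDerivAt γ (γ' t) t)
    (hγ' : ContinuousOn γ' (Icc a b)) (hcal : Calibrated lam L u a b γ γ')
    (ht₀ : t₀ ∈ Icc a b) (hdiff : DifferentiableAt ℝ u (γ t₀)) :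
    lam * u (γ t₀) + fderiv ℝ u (γ t₀) (γ' t₀) = L (γ t₀, γ' t₀) := by
  have hf := continuousOn_exp_mul_lagrangian (lam := lam) hL hγ hγ'
  have hΦ : ∀ t ∈ Icc a b, exp (lam * t) * u (γ t) =
      exp (lam * a) * u (γ a) + ∫ s in a..t, exp (lam * s) * L (γ s, γ' s) := fun t ht => by
    have h := hcal.left_of_dominated hL hu hγ hγ' ht
    unfold Calibrated at h
    linarith
  have h₁ := hasDerivWithinAt_of_eq_add_integral hf hΦ ht₀
  have h₂ := (hasDerivAt_exp_mul_mul_comp (lam := lam) hdiff.hasFDerivAt (hγ t₀ ht₀) rfl)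
  exact mul_left_cancel₀ (exp_ne_zero _)
    ((uniqueDiffOn_Icc hab t₀ ht₀).eq_deriv _ h₂.hasDerivWithinAt h₁)

theorem Dominated.lam_mul_add_fderiv_le (hL : Continuous L) (hu : Dominated lam L u) {x : E n}
    (hx : DifferentiableAt ℝ u x) (v : E n) : lam * u x + fderiv ℝ u x v ≤ L (x, v) := by
  have hσ : ∀ s : ℝ, HasDerivAt (fun s => x + s • v) v s := fun s => by
    simpa using ((hasDerivAt_id s).smul_const v).const_add x
  set σ : ℝ → E n := fun s => x + s • v
  have hg : Continuous fun s => exp (lam * s) * L (σ s, v) := by fun_prop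
  set φ := fun s => exp (lam * s) * u (σ s) - ∫ r in (0 : ℝ)..s, exp (lam * r) * L (σ r, v)
  have hmax : IsLocalMaxOn φ (Ici 0) 0 := eventually_of_mem self_mem_nhdsWithin fun s hs => by
    have := hu.le_integral hs (piecewiseC1_of_hasDerivAt (fun t _ => hσ t) continuousOn_const)
    simp only [φ, intervalIntegral.integral_same, sub_zero]
    linarith
  have hφ : HasDerivAt φ (lam * u x + fderiv ℝ u x v - L (x, v)) 0 := by
    have h1 := hasDerivAt_exp_mul_mul_comp (lam := lam) hx.hasFDerivAt (hσ 0) (by simp [σ])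
    have h2 := intervalIntegral.integral_hasDerivAt_right (hg.intervalIntegrable 0 0)
      (hg.stronglyMeasurableAtFilter _ _) hg.continuousAt
    exact (h1.sub h2).congr_deriv (by simp [σ])
  have hone : (1 : ℝ) ∈ posTangentConeAt (Ici 0) 0 := mem_posTangentConeAt_of_segment_subset <| by
    rw [zero_add, segment_eq_Icc zero_le_one]
    exact Icc_subset_Ici_self
  simpa using hmax.hasFDerivWithinAt_nonpos hφ.hasDerivWithinAt.hasFDerivWithinAt hone

end Discounted

theorem stmt_7_general {n : ℕ} (lam : ℝ)
    (H L : E n × E n → ℝ) (hH : Tonelli H) (hLH : IsLagrangianOf L H)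
    (hLC2 : ContDiff ℝ 2 L)
    (u : E n → ℝ) (hdom : Dominated lam L u)
    (a b : ℝ) (hab : a < b) (γ γ' : ℝ → E n)
    (hγC1 : (∀ t ∈ Set.Icc a b, HasDerivAt γ (γ' t) t) ∧ ContinuousOn γ' (Set.Icc a b))
    (hcal : Calibrated lam L u a b γ γ')
    (t₀ : ℝ) (ht₀ : t₀ ∈ Set.Icc a b)
    (hdiff : DifferentiableAt ℝ u (γ t₀)) :
    gradient u (γ t₀) = Lv L (γ t₀) (γ' t₀) ∧
    lam * u (γ t₀) + H (γ t₀, gradient u (γ t₀)) = 0 := by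
  obtain ⟨hγ, hγ'⟩ := hγC1
  have hL : Continuous L := hLC2.continuous
  have hLv : DifferentiableAt ℝ (fun w => L (γ t₀, w)) (γ' t₀) :=
    ((hLC2.differentiable two_ne_zero).comp
      ((differentiable_const _).prodMk differentiable_id)).differentiableAt
  have hcal_eq := hcal.lam_mul_add_fderiv_eq hL hdom hab hγ hγ' ht₀ hdiff
  have hDu : fderiv ℝ u (γ t₀) = fderiv ℝ (fun w => L (γ t₀, w)) (γ' t₀) :=
    eq_fderiv_of_forall_sub_le hLv fun v => by
      linarith [hdom.lam_mul_add_fderiv_le hL hdiff v]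
  have hgrad : gradient u (γ t₀) = Lv L (γ t₀) (γ' t₀) := by rw [gradient, hDu]; rfl
  have hfenchel : L (γ t₀, γ' t₀) = inner ℝ (Lv L (γ t₀) (γ' t₀)) (γ' t₀) -
      H (γ t₀, Lv L (γ t₀) (γ' t₀)) :=
    eq_inner_gradient_sub_of_isLUB (hLH (γ t₀)) (hH.1.continuous.comp (.prodMk_right _))
      (fun A => (hH.2.2 A).imp fun _ hB => fun q => hB.2 _ q) hLv
  rw [← hgrad, inner_gradient_left] at hfenchel
  exact ⟨hgrad, by linarith⟩

/-- At a differentiability point of a λ-dominated function along a calibrated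
`C¹` curve, `Du = ∂L/∂v` and the discounted Hamilton-Jacobi equation holds. -/
theorem stmt_7 {n : ℕ} (hn : 1 ≤ n) (lam : ℝ) (hlam : 0 < lam)
    (H L : E n × E n → ℝ) (hH : Tonelli H) (hLH : IsLagrangianOf L H)
    (hLC2 : ContDiff ℝ 2 L)
    (u : E n → ℝ) (huc : Continuous u) (hdom : Dominated lam L u)
    (a b : ℝ) (hab : a < b) (γ γ' : ℝ → E n)
    (hγC1 : (∀ t ∈ Set.Icc a b, HasDerivAt γ (γ' t) t) ∧ ContinuousOn γ' (Set.Icc a b))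
    (hcal : Calibrated lam L u a b γ γ')
    (t₀ : ℝ) (ht₀ : t₀ ∈ Set.Icc a b)
    (hdiff : DifferentiableAt ℝ u (γ t₀)) :
    gradient u (γ t₀) = Lv L (γ t₀) (γ' t₀) ∧
    lam * u (γ t₀) + H (γ t₀, gradient u (γ t₀)) = 0 :=
  stmt_7_general lam H L hH hLH hLC2 u hdom a b hab γ γ' hγC1 hcal t₀ ht₀ hdiff

end
end

section
/- Let H be a Tonelli Hamiltonian on ℝⁿ × ℝⁿ with associated Tonelli Lagrangian L, ℤⁿ-periodic in x, and let λ > 0. Suppose u : ℝⁿ → ℝ is bounded, continuous and λ-dominated by L, and γ : (−∞,0] → ℝⁿ is a piecewise C¹ curve with γ(0) = x₀ such that γ|_{[t,0]} is (u,L)-λ-calibrated for every t < 0. Then the improper integral ∫_{−∞}^0 e^{λs} L(γ(s), γ̇(s)) ds converges and u(x₀) = ∫_{−∞}^0 e^{λs} L(γ(s), γ̇(s)) ds; moreover, for every piecewise C¹ curve σ : (−∞,0] → ℝⁿ with σ(0) = x₀, u(x₀) ≤ ∫_{−∞}^0 e^{λs} L(σ(s), σ̇(s)) ds (the integral being a well-defined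 element of (−∞,+∞] since L is bounded below). -/
open Set Filter MeasureTheory Real

noncomputable section

/-!
Calibration of `γ` on `[a, 0]` says `∫_a^0 e^{λt} L(γ, γ') = u x₀ - e^{λa} u (γ a)`, and domination
gives `≥` in the same identity for any other curve `σ` ending at `x₀`. As `u` is bounded,
`e^{λa} u (·) → 0` when `a → -∞`, so both pass to the improper integral. The calibrated action is
integrable on `(-∞, 0]` because its partial integrals are bounded above while `L ≥ -max H(·, 0)`
(finite by periodicity), so its negative part is dominated by a multiple of `e^{λt}`.
-/

open Topology

section Lagrangian

variable {n : ℕ} {H L : E n × E n → ℝ}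

theorem IsLagrangianOf.inner_sub_le (hLH : IsLagrangianOf L H) (x v p : E n) :
    inner ℝ p v - H (x, p) ≤ L (x, v) :=
  (hLH x v).1 ⟨p, rfl⟩

theorem IsLagrangianOf.le_of_forall_inner_sub_le (hLH : IsLagrangianOf L H) {x v : E n} {B : ℝ}
    (h : ∀ p, inner ℝ p v - H (x, p) ≤ B) : L (x, v) ≤ B :=
  (hLH x v).2 fun _ ⟨p, hp⟩ => hp ▸ h p

theorem IsLagrangianOf.eq_iSup (hLH : IsLagrangianOf L H) :
    L = fun z => ⨆ p, inner ℝ p z.2 - H (z.1, p) := by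
  funext ⟨x, v⟩
  have hrange :
      range (fun p => inner ℝ p v - H (x, p)) = {r | ∃ p, r = inner ℝ p v - H (x, p)} := by
    ext r
    exact exists_congr fun p => eq_comm
  exact (hrange ▸ hLH x v).ciSup_eq.symm

theorem IsLagrangianOf.lowerSemicontinuous (hH : Continuous H) (hLH : IsLagrangianOf L H) :
    LowerSemicontinuous L := by
  rw [hLH.eq_iSup]
  refine lowerSemicontinuous_ciSup (fun ⟨x, v⟩ => ⟨L (x, v), ?_⟩) fun p => ?_
  · rintro _ ⟨p, rfl⟩
    exact hLH.inner_sub_le x v p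
  · exact ((continuous_const.inner continuous_snd).sub
      (hH.comp (continuous_fst.prodMk continuous_const))).lowerSemicontinuous

theorem exists_le_of_continuous_of_intVec_periodic {f : E n → ℝ} (hf : Continuous f)
    (hper : ∀ (k : Fin n → ℤ) (x : E n), f (x + intVec k) = f x) : ∃ M, ∀ x, f x ≤ M := by
  let cube : Set (E n) := (EuclideanSpace.equiv (Fin n) ℝ).symm '' univ.pi fun _ => Icc 0 1
  have hcube : IsCompact cube := (isCompact_univ_pi fun _ => isCompact_Icc).image
    (EuclideanSpace.equiv (Fin n) ℝ).symm.continuous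
  obtain ⟨M, hM⟩ := (hcube.image hf).bddAbove
  refine ⟨M, fun x => ?_⟩
  let k : Fin n → ℤ := fun i => ⌊x i⌋
  have hmem : x - intVec k ∈ cube :=
    ⟨fun i => x i - k i, fun i _ => ⟨sub_nonneg.2 (Int.floor_le _),
      by linarith [Int.lt_floor_add_one (x i)]⟩, rfl⟩
  calc f x = f (x - intVec k + intVec k) := by rw [sub_add_cancel]
    _ = f (x - intVec k) := hper k _
    _ ≤ M := hM (mem_image_of_mem f hmem)

theorem IsLagrangianOf.exists_le (hH : Continuous H) (hLH : IsLagrangianOf L H)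
    (hper : ∀ (k : Fin n → ℤ) (x p : E n), H (x + intVec k, p) = H (x, p)) :
    ∃ c, ∀ z, c ≤ L z := by
  obtain ⟨M, hM⟩ := exists_le_of_continuous_of_intVec_periodic (f := fun x => H (x, 0))
    (hH.comp (continuous_id.prodMk continuous_const)) fun k x => hper k x 0
  refine ⟨-M, fun ⟨x, v⟩ => ?_⟩
  have := hLH.inner_sub_le x v 0
  rw [inner_zero_left] at this
  linarith [hM x]

theorem IsLagrangianOf.exists_le_of_norm_le (hLH : IsLagrangianOf L H)
    (hH : ∀ A : ℝ, ∃ B : ℝ, 0 ≤ B ∧ ∀ x p : E n, A * ‖p‖ - B ≤ H (x, p)) (V : ℝ) :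
    ∃ B, ∀ x v, ‖v‖ ≤ V → L (x, v) ≤ B := by
  obtain ⟨B, -, hB⟩ := hH V
  refine ⟨B, fun x v hv => hLH.le_of_forall_inner_sub_le fun p => ?_⟩
  nlinarith [real_inner_le_norm p v, hB x p, mul_le_mul_of_nonneg_left hv (norm_nonneg p)]

theorem IsLagrangianOf.exists_abs_le_of_norm_le (hH : Tonelli H) (hLH : IsLagrangianOf L H)
    (hper : ∀ (k : Fin n → ℤ) (x p : E n), H (x + intVec k, p) = H (x, p)) (V : ℝ) :
    ∃ B, ∀ x v, ‖v‖ ≤ V → |L (x, v)| ≤ B := by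
  obtain ⟨c, hc⟩ := hLH.exists_le hH.1.continuous hper
  obtain ⟨B, hB⟩ := hLH.exists_le_of_norm_le hH.2.2 V
  exact ⟨max (-c) B, fun x v hv => abs_le.2 ⟨by linarith [le_max_left (-c) B, hc (x, v)],
    (hB x v hv).trans (le_max_right _ _)⟩⟩

end Lagrangian

theorem PiecewiseC1.integrableOn_comp {n : ℕ} {a b : ℝ} {γ γ' : ℝ → E n}
    (h : PiecewiseC1 a b γ γ') {F : E n × E n → ℝ} (hF : Measurable F)
    (hbdd : ∀ V, ∃ B, ∀ x v, ‖v‖ ≤ V → |F (x, v)| ≤ B) :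
    IntegrableOn (fun t => F (γ t, γ' t)) (Icc a b) := by
  obtain ⟨hγ, s, -, hγ', C, hC⟩ := h
  obtain ⟨B, hB⟩ := hbdd C
  have hae : (Icc a b \ s : Set ℝ) =ᵐ[volume] Icc a b :=
    sdiff_ae_eq_self.2 (measure_mono_null inter_subset_right (s.finite_toSet.measure_zero _))
  have hγ'm : AEMeasurable γ' (volume.restrict (Icc a b)) := by
    rw [← Measure.restrict_congr_set hae]
    exact hγ'.aemeasurable (measurableSet_Icc.diff s.finite_toSet.measurableSet)
  refine (integrableOn_const (C := B) measure_Icc_lt_top.ne).mono'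
    (hF.comp_aemeasurable ((hγ.aemeasurable measurableSet_Icc).prodMk hγ'm)).aestronglyMeasurable ?_
  filter_upwards [ae_restrict_mem measurableSet_Icc] with t ht using hB _ _ (hC t ht)

theorem integrableOn_Iic_of_intervalIntegral_le {f g : ℝ → ℝ} {b M : ℝ}
    (hf : ∀ a, IntegrableOn f (Ioc a b)) (hg : IntegrableOn g (Iic b))
    (hgf : ∀ t ≤ b, g t ≤ f t) (hM : ∀ a < b, ∫ t in a..b, f t ≤ M) :
    IntegrableOn f (Iic b) := by
  refine integrableOn_Iic_of_intervalIntegral_norm_bounded (M + 2 * ∫ t in Iic b, |g t|) b hf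
    tendsto_id ?_
  filter_upwards [eventually_lt_atBot b] with a ha
  have hfi : IntervalIntegrable f volume a b :=
    (intervalIntegrable_iff_integrableOn_Ioc_of_le ha.le).2 (hf a)
  have hgi : IntervalIntegrable (fun t => 2 * |g t|) volume a b :=
    ((intervalIntegrable_iff_integrableOn_Ioc_of_le ha.le).2
      (hg.mono_set Ioc_subset_Iic_self)).abs.const_mul 2
  -- `f ≥ g` turns a bound on `∫ f` into one on `∫ |f|`, since `|f| ≤ f + 2|g|`
  have hnorm : ∀ t ∈ Icc a b, ‖f t‖ ≤ f t + 2 * |g t| := fun t ht => by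
    have := hgf t ht.2
    rw [Real.norm_eq_abs]
    cases abs_cases (f t) <;> cases abs_cases (g t) <;> linarith
  calc ∫ t in a..b, ‖f t‖ ≤ ∫ t in a..b, (f t + 2 * |g t|) :=
        intervalIntegral.integral_mono_on ha.le hfi.norm (hfi.add hgi) hnorm
    _ = (∫ t in a..b, f t) + 2 * ∫ t in Ioc a b, |g t| := by
        rw [intervalIntegral.integral_add hfi hgi, intervalIntegral.integral_const_mul,
          intervalIntegral.integral_of_le (f := fun t => |g t|) ha.le]
    _ ≤ M + 2 * ∫ t in Iic b, |g t| :=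
        add_le_add (hM a ha) <| mul_le_mul_of_nonneg_left (setIntegral_mono_set hg.abs
          (ae_of_all _ fun _ => abs_nonneg _) Ioc_subset_Iic_self.eventuallyLE) two_pos.le

theorem tendsto_exp_mul_mul_atBot_of_abs_le {lam C : ℝ} (hlam : 0 < lam) {g : ℝ → ℝ}
    (hg : ∀ t, |g t| ≤ C) : Tendsto (fun t => exp (lam * t) * g t) atBot (𝓝 0) :=
  (tendsto_exp_atBot.comp (tendsto_id.const_mul_atBot hlam)).zero_mul_isBoundedUnder_le
    ⟨C, eventually_map.2 (Eventually.of_forall hg)⟩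

theorem Calibrated.intervalIntegral_eq {n : ℕ} {lam a : ℝ} {L : E n × E n → ℝ} {u : E n → ℝ}
    {γ γ' : ℝ → E n} (h : Calibrated lam L u a 0 γ γ') :
    ∫ t in a..0, exp (lam * t) * L (γ t, γ' t) = u (γ 0) - exp (lam * a) * u (γ a) := by
  rw [← h, mul_zero, exp_zero, one_mul]

theorem stmt_9_general {n : ℕ} (lam : ℝ) (hlam : 0 < lam)
    (H L : E n × E n → ℝ) (hH : Tonelli H) (hLH : IsLagrangianOf L H)
    (hper : ∀ (k : Fin n → ℤ) (x pp : E n), H (x + intVec k, pp) = H (x, pp))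
    (u : E n → ℝ) (hub : ∃ C : ℝ, ∀ x : E n, |u x| ≤ C)
    (hdom : Dominated lam L u)
    (x₀ : E n) (γ γ' : ℝ → E n) (hγ0 : γ 0 = x₀)
    (hpw : ∀ a < (0:ℝ), PiecewiseC1 a 0 γ γ')
    (hcal : ∀ a < (0:ℝ), Calibrated lam L u a 0 γ γ') :
    IntegrableOn (fun s => Real.exp (lam * s) * L (γ s, γ' s)) (Set.Iic 0) volume ∧
    u x₀ = ∫ s in Set.Iic (0:ℝ), Real.exp (lam * s) * L (γ s, γ' s) ∧
    ∀ σ σ' : ℝ → E n, (∀ a < (0:ℝ), PiecewiseC1 a 0 σ σ') → σ 0 = x₀ →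
      IntegrableOn (fun s => Real.exp (lam * s) * L (σ s, σ' s)) (Set.Iic 0) volume →
      u x₀ ≤ ∫ s in Set.Iic (0:ℝ), Real.exp (lam * s) * L (σ s, σ' s)  := by
  obtain ⟨c, hc⟩ := hLH.exists_le hH.1.continuous hper
  obtain ⟨C, hC⟩ := hub
  have hLm : Measurable L := (hLH.lowerSemicontinuous hH.1.continuous).measurable
  have hloc : ∀ w w' : ℝ → E n, (∀ a < (0:ℝ), PiecewiseC1 a 0 w w') → ∀ a,
      IntegrableOn (fun t => exp (lam * t) * L (w t, w' t)) (Ioc a 0) := fun w w' hw a => by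
    rcases lt_or_ge a 0 with ha | ha
    · have hL := (hw a ha).integrableOn_comp hLm (hLH.exists_abs_le_of_norm_le hH hper)
      exact (hL.continuousOn_mul (by fun_prop) isCompact_Icc).mono_set Ioc_subset_Icc_self
    · simp [Ioc_eq_empty_of_le ha]
  have hlim : ∀ w : ℝ → E n, Tendsto (fun a => u x₀ - exp (lam * a) * u (w a)) atBot (𝓝 (u x₀)) :=
    fun w => by
      simpa using
        tendsto_const_nhds.sub (tendsto_exp_mul_mul_atBot_of_abs_le hlam fun t => hC (w t))
  have hγI : ∀ a < 0, ∫ t in a..0, exp (lam * t) * L (γ t, γ' t) = u x₀ - exp (lam * a) * u (γ a) :=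
    fun a ha => hγ0 ▸ (hcal a ha).intervalIntegral_eq
  have hint : IntegrableOn (fun t => exp (lam * t) * L (γ t, γ' t)) (Iic 0) := by
    refine integrableOn_Iic_of_intervalIntegral_le (M := u x₀ + C) (hloc γ γ' hpw)
      ((integrableOn_exp_mul_Iic hlam 0).mul_const c)
      (fun t _ => mul_le_mul_of_nonneg_left (hc _) (exp_pos _).le) fun a ha => ?_
    have hexp : exp (lam * a) ≤ 1 := exp_le_one_iff.2 (by nlinarith)
    rw [hγI a ha]
    nlinarith [abs_le.1 (hC (γ a)), abs_nonneg (u (γ a)), exp_pos (lam * a)]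
  refine ⟨hint, tendsto_nhds_unique ((hlim γ).congr' ?_)
      (intervalIntegral_tendsto_integral_Iic 0 hint tendsto_id),
    fun σ σ' hσ hσ0 hintσ => le_of_tendsto_of_tendsto (hlim σ)
      (intervalIntegral_tendsto_integral_Iic 0 hintσ tendsto_id) ?_⟩
  · filter_upwards [eventually_lt_atBot 0] with a ha using (hγI a ha).symm
  · filter_upwards [eventually_lt_atBot 0] with a ha
    simpa [hσ0] using hdom a 0 ha σ σ' (hσ a ha)

/-- If `u` is bounded, continuous, λ-dominated and `γ : (-∞,0] → ℝⁿ` is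
`(u,L)`-λ-calibrated on every `[t,0]`, then `u(x₀)` equals the improper
discounted action of `γ`, and it is a lower bound for the discounted action of
every piecewise `C¹` curve ending at `x₀`. -/
theorem stmt_9 {n : ℕ} (hn : 1 ≤ n) (lam : ℝ) (hlam : 0 < lam)
    (H L : E n × E n → ℝ) (hH : Tonelli H) (hLH : IsLagrangianOf L H)
    (hper : ∀ (k : Fin n → ℤ) (x pp : E n), H (x + intVec k, pp) = H (x, pp))
    (u : E n → ℝ) (huc : Continuous u) (hub : ∃ C : ℝ, ∀ x : E n, |u x| ≤ C)
    (hdom : Dominated lam L u)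
    (x₀ : E n) (γ γ' : ℝ → E n) (hγ0 : γ 0 = x₀)
    (hpw : ∀ a < (0:ℝ), PiecewiseC1 a 0 γ γ')
    (hcal : ∀ a < (0:ℝ), Calibrated lam L u a 0 γ γ') :
    IntegrableOn (fun s => Real.exp (lam * s) * L (γ s, γ' s)) (Set.Iic 0) volume ∧
    u x₀ = ∫ s in Set.Iic (0:ℝ), Real.exp (lam * s) * L (γ s, γ' s) ∧
    ∀ σ σ' : ℝ → E n, (∀ a < (0:ℝ), PiecewiseC1 a 0 σ σ') → σ 0 = x₀ →
      IntegrableOn (fun s => Real.exp (lam * s) * L (σ s, σ' s)) (Set.Iic 0) volume →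
      u x₀ ≤ ∫ s in Set.Iic (0:ℝ), Real.exp (lam * s) * L (σ s, σ' s) :=
  stmt_9_general lam hlam H L hH hLH hper u hub hdom x₀ γ γ' hγ0 hpw hcal
end
end

section
/- Let H be a Tonelli Hamiltonian on ℝⁿ × ℝⁿ, λ > 0, and let Φᵗ be a complete flow of the λ-discounted Hamiltonian vector field. Let u : ℝⁿ → ℝ be locally Lipschitz and satisfy λu(x) + H(x, Du(x)) = 0 at every point x where u is differentiable. Define F(x,p) = λu(x) + H(x,p). Then for every (x,p) ∈ ℝⁿ × ℝⁿ and every t ≥ 0, F(Φᵗ(x,p)) ≤ F(x,p) e^{−λt}. In particular, the set {(x,p) : F(x,p) ≤ 0} is forward invariant under Φᵗ. -/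
open Set Filter MeasureTheory Real

noncomputable section

/-- A complete flow of the λ-discounted Hamiltonian vector field of `H`. -/
def IsDiscountedFlow {n : ℕ} (lam : ℝ) (H : E n × E n → ℝ)
    (Φ : ℝ → E n × E n → E n × E n) : Prop :=
  Φ 0 = id ∧ (∀ t s : ℝ, ∀ z : E n × E n, Φ (t + s) z = Φ t (Φ s z)) ∧
  ∀ (z : E n × E n) (t : ℝ),
    HasDerivAt (fun s => (Φ s z).1) (Hp H (Φ t z).1 (Φ t z).2) t ∧
    HasDerivAt (fun s => (Φ s z).2) (-Hx H (Φ t z).1 (Φ t z).2 - lam • (Φ t z).2) t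

/-!
Along a solution `(x(t), p(t))` of the discounted Hamiltonian system,
`d/dt [e^{λt} H(x, p)] = -λ e^{λt} L(x, ẋ)`, where `L(x, ẋ) = ⟪p, ∂H/∂p⟫ - H(x, p)` by the
Fenchel equality. On the other hand, an almost-everywhere solution `u` is dominated by `L`:
`e^{λT} u(x(T)) - u(x(0)) ≤ ∫₀ᵀ e^{λs} L(x, ẋ) ds`. Multiplying the latter by `λ` and adding the
former gives `e^{λT} F(Φᵀ z) ≤ F(z)`.

Since `u` need not be differentiable anywhere along `x(·)`, the domination is proved along the
translates `x(·) + y`: by Rademacher's theorem and Fubini, for almost every `y` the function `u` is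
differentiable at `x(s) + y` for almost every `s`. There the Hamilton-Jacobi equation and the
convexity of `H` in `p` bound the derivative of `e^{λs} u(x(s) + y)` by an integrand that is
continuous in `y` and equals `e^{λs} L(x, ẋ)` at `y = 0`; letting `y → 0` concludes.
-/

open InnerProductSpace Metric Topology
open scoped NNReal

section Measure

variable {F : Type*} [NormedAddCommGroup F] [NormedSpace ℝ F] [FiniteDimensional ℝ F]
  [MeasurableSpace F] [BorelSpace F] {μ : Measure F} [μ.IsAddHaarMeasure]

theorem LocallyLipschitz.ae_differentiableAt {f : F → ℝ} (hf : LocallyLipschitz f) :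
    ∀ᵐ x ∂μ, DifferentiableAt ℝ f x := by
  rw [ae_iff]
  refine measure_null_of_locally_null _ fun x _ => ?_
  obtain ⟨K, t, ht, hK⟩ := hf x
  obtain ⟨ε, hε, hεt⟩ := Metric.mem_nhds_iff.1 ht
  refine ⟨_, inter_mem_nhdsWithin _ (ball_mem_nhds x hε), measure_mono_null ?_
    (ae_iff.1 ((hK.mono hεt).ae_differentiableWithinAt_of_mem (μ := μ)))⟩
  rintro y ⟨hy, hyε⟩ hdiff
  exact hy ((hdiff hyε).differentiableAt (isOpen_ball.mem_nhds hyε))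

theorem ae_ae_add_of_ae {α : Type*} [MeasurableSpace α] {ν : Measure α} [SFinite ν]
    {P : F → Prop} (hP : MeasurableSet {w | P w}) (h : ∀ᵐ w ∂μ, P w)
    {X : α → F} (hX : Measurable X) :
    ∀ᵐ y ∂μ, ∀ᵐ s ∂ν, P (X s + y) := by
  refine (Measure.ae_ae_comm ?_).2 (Eventually.of_forall fun s => ?_)
  · exact hP.preimage ((hX.comp measurable_snd).add measurable_fst)
  · exact (measurePreserving_add_left μ (X s)).quasiMeasurePreserving.ae h

end Measure

theorem norm_gradient_le_of_lipschitzOnWith {F : Type*} [NormedAddCommGroup F]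
    [InnerProductSpace ℝ F] [CompleteSpace F] {f : F → ℝ} {x : F} {K : ℝ≥0} {S : Set F}
    (hS : S ∈ 𝓝 x) (hf : LipschitzOnWith K f S) : ‖gradient f x‖ ≤ K := by
  rw [gradient, LinearIsometryEquiv.norm_map]
  exact norm_fderiv_le_of_lipschitzOn ℝ hS hf

theorem le_of_ae_le_of_mem_nhds {X : Type*} [TopologicalSpace X] [MeasurableSpace X]
    {μ : Measure X} [μ.IsOpenPosMeasure] {f g : X → ℝ} {x : X} {U : Set X}
    (hf : ContinuousAt f x) (hg : ContinuousAt g x) (hU : U ∈ 𝓝 x)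
    (h : ∀ᵐ y ∂μ, y ∈ U → f y ≤ g y) : f x ≤ g x := by
  by_contra! hlt
  have hV : {y | y ∈ U ∧ g y < f y} ∈ 𝓝 x := inter_mem hU (hg.eventually_lt hf hlt)
  refine (μ.measure_pos_of_mem_nhds hV).ne' (measure_mono_null ?_ (ae_iff.1 h))
  rintro y ⟨hyU, hy⟩ hle
  exact (hle hyU).not_gt hy

theorem AbsolutelyContinuousOnInterval.sub_le_integral_of_ae_hasDerivAt_le {f g : ℝ → ℝ}
    {a b : ℝ} (hab : a ≤ b) (hf : AbsolutelyContinuousOnInterval f a b)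
    (hg : IntervalIntegrable g volume a b)
    (h : ∀ᵐ s, s ∈ Ioo a b → ∃ d, HasDerivAt f d s ∧ d ≤ g s) :
    f b - f a ≤ ∫ s in a..b, g s := by
  rw [← hf.integral_deriv_eq_sub]
  refine intervalIntegral.integral_mono_ae_restrict hab hf.intervalIntegrable_deriv hg ?_
  rw [Measure.restrict_congr_set Ioo_ae_eq_Icc.symm, EventuallyLE,
    ae_restrict_iff' measurableSet_Ioo]
  filter_upwards [h] with s hs hsI
  obtain ⟨d, hd, hdg⟩ := hs hsI
  rwa [hd.deriv]

section Hamiltonian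

variable {n : ℕ} {H : E n × E n → ℝ} {x p : E n}

theorem hasFDerivAt_fiber (hH : DifferentiableAt ℝ H (x, p)) :
    HasFDerivAt (fun q => H (x, q))
      ((fderiv ℝ H (x, p)).comp (ContinuousLinearMap.inr ℝ (E n) (E n))) p :=
  hH.hasFDerivAt.comp p (hasFDerivAt_prodMk_right x p)

theorem hasFDerivAt_base (hH : DifferentiableAt ℝ H (x, p)) :
    HasFDerivAt (fun y => H (y, p))
      ((fderiv ℝ H (x, p)).comp (ContinuousLinearMap.inl ℝ (E n) (E n))) x :=
  hH.hasFDerivAt.comp x (hasFDerivAt_prodMk_left x p)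

theorem Hp_eq_toDual_symm (hH : DifferentiableAt ℝ H (x, p)) :
    Hp H x p = (toDual ℝ (E n)).symm
      ((fderiv ℝ H (x, p)).comp (ContinuousLinearMap.inr ℝ (E n) (E n))) := by
  rw [Hp, gradient, (hasFDerivAt_fiber hH).fderiv]

theorem inner_Hp (hH : DifferentiableAt ℝ H (x, p)) (w : E n) :
    ⟪Hp H x p, w⟫_ℝ = fderiv ℝ H (x, p) (0, w) := by
  rw [Hp_eq_toDual_symm hH, toDual_symm_apply]
  rfl

theorem inner_Hx (hH : DifferentiableAt ℝ H (x, p)) (w : E n) :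
    ⟪Hx H x p, w⟫_ℝ = fderiv ℝ H (x, p) (w, 0) := by
  rw [Hx, gradient, (hasFDerivAt_base hH).fderiv, toDual_symm_apply]
  rfl

theorem Continuous.Hp {X : Type*} [TopologicalSpace X] (hH : ContDiff ℝ 1 H) {x p : X → E n}
    (hx : Continuous x) (hp : Continuous p) : Continuous fun w => Hp H (x w) (p w) := by
  simp_rw [Hp_eq_toDual_symm (hH.differentiable one_ne_zero _)]
  exact (toDual ℝ (E n)).symm.continuous.comp
    (((hH.continuous_fderiv one_ne_zero).comp (hx.prodMk hp)).clm_comp continuous_const)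

theorem HasDerivAt.comp_hamiltonian {Z : ℝ → E n × E n} {a b : E n} {s : ℝ}
    (hH : DifferentiableAt ℝ H (Z s))
    (h₁ : HasDerivAt (fun t => (Z t).1) a s) (h₂ : HasDerivAt (fun t => (Z t).2) b s) :
    HasDerivAt (fun t => H (Z t))
      (⟪Hx H (Z s).1 (Z s).2, a⟫_ℝ + ⟪Hp H (Z s).1 (Z s).2, b⟫_ℝ) s := by
  refine (hH.hasFDerivAt.comp_hasDerivAt s (h₁.prodMk h₂)).congr_deriv ?_
  rw [inner_Hx hH, inner_Hp hH, ← map_add, Prod.mk_add_mk, add_zero, zero_add]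

theorem Tonelli.inner_Hp_sub_le (hH : Tonelli H) (x p q : E n) :
    ⟪Hp H x p, q - p⟫_ℝ ≤ H (x, q) - H (x, p) := by
  obtain rfl | hqp := eq_or_ne q p
  · simp
  set w := q - p
  have hw : w ≠ 0 := sub_ne_zero.2 hqp
  have hfiber : ContDiff ℝ 2 fun q => H (x, q) := hH.1.comp (contDiff_const.prodMk contDiff_id)
  have hHp : Differentiable ℝ (Hp H x) :=
    (toDual ℝ (E n)).symm.toContinuousLinearEquiv.differentiable.comp
      ((hfiber.fderiv_right (m := 1) le_rfl).differentiable one_ne_zero)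
  have hline : ∀ t : ℝ, HasDerivAt (fun t : ℝ => p + t • w) w t := fun t => by
    simpa using ((hasDerivAt_id t).smul_const w).const_add p
  set ψ : ℝ → ℝ := fun t => ⟪Hp H x (p + t • w), w⟫_ℝ
  have hφ : ∀ t : ℝ, HasDerivAt (fun t => H (x, p + t • w)) (ψ t) t := fun t => by
    have hd : DifferentiableAt ℝ H (x, p + t • w) := hH.1.differentiable two_ne_zero _
    rw [show ψ t = _ from inner_Hp hd w]
    exact hd.hasFDerivAt.comp_hasDerivAt t ((hasDerivAt_const t x).prodMk (hline t))
  have hψ' : ∀ t, HasDerivAt ψ ⟪fderiv ℝ (Hp H x) (p + t • w) w, w⟫_ℝ t := fun t => by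
    simpa using ((hHp _).hasFDerivAt.comp_hasDerivAt t (hline t)).inner ℝ (hasDerivAt_const t w)
  have hψ : StrictMono ψ := strictMono_of_hasDerivAt_pos hψ' fun t => hH.2.1 x _ w hw
  obtain ⟨c, hc, hslope⟩ := exists_hasDerivAt_eq_slope _ ψ one_pos
    (fun t _ => (hφ t).continuousAt.continuousWithinAt) (fun t _ => hφ t)
  have h0c := hψ hc.1
  simp only [hslope, one_smul, zero_smul, add_zero, sub_zero, div_one, w, add_sub_cancel, ψ] at h0c
  exact h0c.le

-- `L(x, ∂H/∂p(x,p))`, by the Fenchel equality.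
def legendreValue (H : E n × E n → ℝ) (x p : E n) : ℝ := ⟪p, Hp H x p⟫_ℝ - H (x, p)

theorem Continuous.legendreValue {X : Type*} [TopologicalSpace X] (hH : ContDiff ℝ 1 H)
    {x p : X → E n} (hx : Continuous x) (hp : Continuous p) :
    Continuous fun w => legendreValue H (x w) (p w) :=
  (hp.inner (hx.Hp hH hp)).sub (hH.continuous.comp (hx.prodMk hp))

theorem hasDerivAt_exp_mul_H {lam s : ℝ} {Z : ℝ → E n × E n} (hH : DifferentiableAt ℝ H (Z s))
    (h₁ : HasDerivAt (fun t => (Z t).1) (Hp H (Z s).1 (Z s).2) s)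
    (h₂ : HasDerivAt (fun t => (Z t).2) (-Hx H (Z s).1 (Z s).2 - lam • (Z s).2) s) :
    HasDerivAt (fun t => exp (lam * t) * H (Z t))
      (-lam * (exp (lam * s) * legendreValue H (Z s).1 (Z s).2)) s := by
  refine ((((hasDerivAt_id' s).const_mul lam).exp).mul (h₁.comp_hamiltonian hH h₂)).congr_deriv ?_
  simp only [legendreValue, inner_sub_right, inner_neg_right, real_inner_smul_right,
    real_inner_comm (Hx H _ _), real_inner_comm (Z s).2]
  ring

theorem IsDiscountedFlow.continuous_orbit {lam : ℝ} {Φ : ℝ → E n × E n → E n × E n}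
    (hΦ : IsDiscountedFlow lam H Φ) (z : E n × E n) : Continuous fun s => Φ s z :=
  continuous_iff_continuousAt.2 fun s =>
    (hΦ.2.2 z s).1.continuousAt.prodMk (hΦ.2.2 z s).2.continuousAt

theorem IsDiscountedFlow.exp_mul_H_sub_eq {lam : ℝ} {Φ : ℝ → E n × E n → E n × E n}
    (hΦ : IsDiscountedFlow lam H Φ) (hH : ContDiff ℝ 1 H) (z : E n × E n) (T : ℝ) :
    exp (lam * T) * H (Φ T z) - H z =
      -lam * ∫ s in (0 : ℝ)..T, exp (lam * s) * legendreValue H (Φ s z).1 (Φ s z).2 := by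
  have hderiv s := hasDerivAt_exp_mul_H (hH.differentiable one_ne_zero _) (hΦ.2.2 z s).1
    (hΦ.2.2 z s).2
  have hcont := hΦ.continuous_orbit z
  rw [← intervalIntegral.integral_const_mul, intervalIntegral.integral_eq_sub_of_hasDerivAt
    (fun s _ => hderiv s)]
  · simp [hΦ.1]
  · exact (continuous_const.mul ((continuous_exp.comp (continuous_const.mul continuous_id)).mul
      ((continuous_fst.comp hcont).legendreValue hH (continuous_snd.comp hcont)))
      ).intervalIntegrable _ _

def lagrangianBound (H : E n × E n → ℝ) (K : ℝ) (x y p : E n) : ℝ :=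
  legendreValue H x p + (H (x, p) - H (x + y, p)) + (K + ‖p‖) * ‖Hp H x p - Hp H (x + y) p‖

@[simp]
theorem lagrangianBound_zero (K : ℝ) (x p : E n) :
    lagrangianBound H K x 0 p = legendreValue H x p := by
  simp [lagrangianBound]

theorem Continuous.lagrangianBound {X : Type*} [TopologicalSpace X] (hH : ContDiff ℝ 1 H) (K : ℝ)
    {x y p : X → E n} (hx : Continuous x) (hy : Continuous y) (hp : Continuous p) :
    Continuous fun w => lagrangianBound H K (x w) (y w) (p w) :=
  ((hx.legendreValue hH hp).add ((hH.continuous.comp (hx.prodMk hp)).sub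
    (hH.continuous.comp ((hx.add hy).prodMk hp)))).add
    ((continuous_const.add hp.norm).mul ((hx.Hp hH hp).sub ((hx.add hy).Hp hH hp)).norm)

theorem Tonelli.inner_sub_le_lagrangianBound (hH : Tonelli H) {K : ℝ} {q : E n} (hq : ‖q‖ ≤ K)
    (x y p : E n) : ⟪q, Hp H x p⟫_ℝ - H (x + y, q) ≤ lagrangianBound H K x y p := by
  have hconv := hH.inner_Hp_sub_le (x + y) p q
  have hCS := real_inner_le_norm (q - p) (Hp H x p - Hp H (x + y) p)
  have hqp : ‖q - p‖ ≤ K + ‖p‖ := (norm_sub_le q p).trans (by linarith)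
  have := mul_le_mul_of_nonneg_right hqp (norm_nonneg (Hp H x p - Hp H (x + y) p))
  rw [real_inner_comm] at hconv
  simp only [lagrangianBound, legendreValue, inner_sub_left, inner_sub_right] at *
  linarith

end Hamiltonian

section Domination

variable {n : ℕ} {lam : ℝ} {H : E n × E n → ℝ} {u : E n → ℝ} {γ P : ℝ → E n}

theorem exp_mul_sub_le_integral_lagrangianBound (hH : Tonelli H)
    (hHJ : ∀ x, DifferentiableAt ℝ u x → lam * u x + H (x, gradient u x) = 0)
    (hγ : ∀ s, HasDerivAt γ (Hp H (γ s) (P s)) s) (hP : Continuous P) {a b : ℝ} (hab : a ≤ b)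
    {y : E n} {K : ℝ≥0} {S : Set (E n)} (hK : LipschitzOnWith K u S)
    (hS : ∀ s ∈ Icc a b, S ∈ 𝓝 (γ s + y)) (hdiff : ∀ᵐ s, DifferentiableAt ℝ u (γ s + y)) :
    exp (lam * b) * u (γ b + y) - exp (lam * a) * u (γ a + y) ≤
      ∫ s in a..b, exp (lam * s) * lagrangianBound H K (γ s) y (P s) := by
  have hγc : Continuous γ := continuous_iff_continuousAt.2 fun s => (hγ s).continuousAt
  have hγC1 : ContDiff ℝ 1 γ := by
    refine contDiff_one_iff_deriv.2 ⟨fun s => (hγ s).differentiableAt, ?_⟩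
    rw [show deriv γ = fun s => Hp H (γ s) (P s) from funext fun s => (hγ s).deriv]
    exact hγc.Hp (hH.1.of_le one_le_two) hP
  obtain ⟨Kγ, hKγ⟩ := ((hγC1.add (contDiff_const (c := y))).contDiffOn (s := uIcc a b)
    ).exists_lipschitzOnWith one_ne_zero (convex_uIcc a b) isCompact_uIcc
  have hmaps : MapsTo (fun s => γ s + y) (uIcc a b) S := fun s hs =>
    mem_of_mem_nhds (hS s (uIcc_of_le hab ▸ hs))
  have hAC : AbsolutelyContinuousOnInterval (fun s => exp (lam * s) * u (γ s + y)) a b :=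
    (ContDiff.contDiffOn (by fun_prop) (n := 1)).absolutelyContinuousOnInterval.mul
      (hK.comp hKγ hmaps).absolutelyContinuousOnInterval
  refine hAC.sub_le_integral_of_ae_hasDerivAt_le hab ?_ ?_
  · exact ((continuous_exp.comp (continuous_const.mul continuous_id)).mul
      (hγc.lagrangianBound (hH.1.of_le one_le_two) K continuous_const hP)).intervalIntegrable a b
  filter_upwards [hdiff] with s hs hsI
  set q := gradient u (γ s + y)
  have hq : ‖q‖ ≤ K := norm_gradient_le_of_lipschitzOnWith (hS s (Ioo_subset_Icc_self hsI)) hK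
  have hu' : HasDerivAt (fun t => u (γ t + y)) ⟪q, Hp H (γ s) (P s)⟫_ℝ s := by
    have := hs.hasGradientAt.hasFDerivAt.comp_hasDerivAt s ((hγ s).add_const y)
    rwa [toDual_apply_apply] at this
  refine ⟨_, ((hasDerivAt_id' s).const_mul lam).exp.mul hu', ?_⟩
  have hHJs : exp (lam * s) * (lam * 1) * u (γ s + y) + exp (lam * s) * ⟪q, Hp H (γ s) (P s)⟫_ℝ
      = exp (lam * s) * (⟪q, Hp H (γ s) (P s)⟫_ℝ - H (γ s + y, q)) := by
    linear_combination exp (lam * s) * hHJ _ hs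
  rw [hHJs]
  exact mul_le_mul_of_nonneg_left (hH.inner_sub_le_lagrangianBound hq (γ s) y (P s))
    (exp_pos _).le

theorem exp_mul_sub_le_integral_legendreValue (hH : Tonelli H) (hu : LocallyLipschitz u)
    (hHJ : ∀ x, DifferentiableAt ℝ u x → lam * u x + H (x, gradient u x) = 0)
    (hγ : ∀ s, HasDerivAt γ (Hp H (γ s) (P s)) s) (hP : Continuous P) {a b : ℝ} (hab : a ≤ b) :
    exp (lam * b) * u (γ b) - exp (lam * a) * u (γ a) ≤
      ∫ s in a..b, exp (lam * s) * legendreValue H (γ s) (P s) := by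
  have hγc : Continuous γ := continuous_iff_continuousAt.2 fun s => (hγ s).continuousAt
  set C := (fun w : ℝ × E n => γ w.1 + w.2) '' (Icc a b ×ˢ closedBall 0 2)
  have hC : IsCompact C := (isCompact_Icc.prod (isCompact_closedBall _ _)).image
    ((hγc.comp continuous_fst).add continuous_snd)
  obtain ⟨K, hK⟩ := LocallyLipschitzOn.exists_lipschitzOnWith_of_compact hC hu.locallyLipschitzOn
  have hS : ∀ y ∈ ball (0 : E n) 1, ∀ s ∈ Icc a b, C ∈ 𝓝 (γ s + y) := by
    refine fun y hy s hs => mem_of_superset (ball_mem_nhds _ one_pos) fun w hw => ?_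
    refine ⟨(s, w - γ s), ⟨hs, ?_⟩, add_sub_cancel _ _⟩
    rw [mem_ball_zero_iff] at hy
    rw [mem_ball, dist_eq_norm] at hw
    rw [mem_closedBall, dist_zero_right]
    calc ‖w - γ s‖ = ‖(w - (γ s + y)) + y‖ := by congr 1; abel
      _ ≤ ‖w - (γ s + y)‖ + ‖y‖ := norm_add_le _ _
      _ ≤ 2 := by linarith
  have hbound : Continuous fun w : E n × ℝ =>
      exp (lam * w.2) * lagrangianBound H K (γ w.2) w.1 (P w.2) :=
    (continuous_exp.comp (continuous_const.mul continuous_snd)).mul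
      ((hγc.comp continuous_snd).lagrangianBound (hH.1.of_le one_le_two) K continuous_fst
        (hP.comp continuous_snd))
  have hG : Continuous fun y => ∫ s in a..b, exp (lam * s) * lagrangianBound H K (γ s) y (P s) :=
    intervalIntegral.continuous_parametric_intervalIntegral_of_continuous'
      (f := fun y s => exp (lam * s) * lagrangianBound H K (γ s) y (P s)) hbound a b
  have hF : Continuous fun y => exp (lam * b) * u (γ b + y) - exp (lam * a) * u (γ a + y) := by
    have := hu.continuous
    fun_prop
  have := le_of_ae_le_of_mem_nhds (μ := volume) hF.continuousAt hG.continuousAt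
    (ball_mem_nhds 0 one_pos) ?_
  · simpa using this
  filter_upwards [ae_ae_add_of_ae (ν := volume) (measurableSet_of_differentiableAt ℝ u)
    hu.ae_differentiableAt hγc.measurable] with y hy hyball
  exact exp_mul_sub_le_integral_lagrangianBound hH hHJ hγ hP hab hK (hS y hyball) hy

end Domination

theorem stmt_13_general {n : ℕ} (lam : ℝ) (hlam : 0 < lam)
    (H : E n × E n → ℝ) (hH : Tonelli H)
    (Φ : ℝ → E n × E n → E n × E n) (hΦ : IsDiscountedFlow lam H Φ)
    (u : E n → ℝ) (hulip : LocallyLipschitz u)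
    (hHJ : ∀ x : E n, DifferentiableAt ℝ u x → lam * u x + H (x, gradient u x) = 0) :
    (∀ (z : E n × E n) (t : ℝ), 0 ≤ t →
      lam * u (Φ t z).1 + H (Φ t z) ≤ (lam * u z.1 + H z) * Real.exp (-(lam * t))) ∧
    (∀ z : E n × E n, lam * u z.1 + H z ≤ 0 →
      ∀ t : ℝ, 0 ≤ t → lam * u (Φ t z).1 + H (Φ t z) ≤ 0) := by
  have hdecay (z : E n × E n) (t : ℝ) (ht : 0 ≤ t) :
      lam * u (Φ t z).1 + H (Φ t z) ≤ (lam * u z.1 + H z) * exp (-(lam * t)) := by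
    have henergy := hΦ.exp_mul_H_sub_eq (hH.1.of_le one_le_two) z t
    have hdom := exp_mul_sub_le_integral_legendreValue hH hulip hHJ (fun s => (hΦ.2.2 z s).1)
      (continuous_snd.comp (hΦ.continuous_orbit z)) ht
    simp only [mul_zero, exp_zero, one_mul, hΦ.1, id] at hdom
    rw [exp_neg, ← div_eq_mul_inv, le_div_iff₀ (exp_pos _)]
    linarith [mul_le_mul_of_nonneg_left hdom hlam.le]
  exact ⟨hdecay, fun z hz t ht =>
    (hdecay z t ht).trans (mul_nonpos_of_nonpos_of_nonneg hz (exp_pos _).le)⟩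

/-- `F(x,p) = λu(x) + H(x,p)` decays along the flow:
`F(Φᵗ(x,p)) ≤ F(x,p)e^{-λt}` for `t ≥ 0`; hence `{F ≤ 0}` is forward
invariant. -/
theorem stmt_13 {n : ℕ} (hn : 1 ≤ n) (lam : ℝ) (hlam : 0 < lam)
    (H : E n × E n → ℝ) (hH : Tonelli H)
    (Φ : ℝ → E n × E n → E n × E n) (hΦ : IsDiscountedFlow lam H Φ)
    (u : E n → ℝ) (hulip : LocallyLipschitz u)
    (hHJ : ∀ x : E n, DifferentiableAt ℝ u x → lam * u x + H (x, gradient u x) = 0) :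
    (∀ (z : E n × E n) (t : ℝ), 0 ≤ t →
      lam * u (Φ t z).1 + H (Φ t z) ≤ (lam * u z.1 + H z) * Real.exp (-(lam * t))) ∧
    (∀ z : E n × E n, lam * u z.1 + H z ≤ 0 →
      ∀ t : ℝ, 0 ≤ t → lam * u (Φ t z).1 + H (Φ t z) ≤ 0) :=
  stmt_13_general lam hlam H hH Φ hΦ u hulip hHJ
end
end
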